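/- arXiv:1605.07025 — 2 statements merged into one kernel-verified Lean document; each statement's English description precedes it below -/
import Mathlib

section
/- (Feature hashing is unbiased) Let φ(x), φ(x') ∈ R^n be fixed vectors. Let h : {1,…,n} → {1,…,m} and ξ : {1,…,n} → {±1} be independent uniformly random hash functions (all values independent and uniform). Define φ̄_j(x) = Σ_{i : h(i)=j} ξ(i) φ_i(x). Then E[φ̄(x)^T φ̄(x')] = φ(x)^T φ(x'). -/
/-! Expanding the inner product of the hashed vectors gives
`φ̄(x)ᵀ φ̄(x') = ∑ i, ∑ k, a i * b k * ξ i * ξ k * [h i = h k]`.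
The diagonal terms equal `a i * b i` because `ξ i ^ 2 = 1`. For `i ≠ k` the sign `ξ i` is
independent of `(h i, h k, ξ k)`, so the expectation of the term factors through `E[ξ i] = 0`. -/

open MeasureTheory ProbabilityTheory Finset

theorem sum_fiber_mul_sum_fiber {ι κ R : Type*} [Fintype ι] [Fintype κ] [DecidableEq κ]
    [CommSemiring R] (g : ι → κ) (x y : ι → R) :
    ∑ j, (∑ i, if g i = j then x i else 0) * (∑ k, if g k = j then y k else 0) =
      ∑ i, ∑ k, if g i = g k then x i * y k else 0 := by
  simp_rw [sum_mul, mul_sum, ite_mul, zero_mul, mul_ite, mul_zero]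
  rw [sum_comm]
  refine sum_congr rfl fun i _ => ?_
  rw [sum_comm]
  refine sum_congr rfl fun k _ => ?_
  simp [eq_comm]

section Rademacher

variable {Ω : Type*} [MeasurableSpace Ω] {μ : Measure Ω} {ξ : Ω → ℝ}

def IsRademacher (ξ : Ω → ℝ) (μ : Measure Ω) : Prop :=
  μ (ξ ⁻¹' {1}) = 2⁻¹ ∧ μ (ξ ⁻¹' {-1}) = 2⁻¹

theorem IsRademacher.ae_eq_one_or_neg_one [IsProbabilityMeasure μ] (hξ : IsRademacher ξ μ)
    (hm : Measurable ξ) : ∀ᵐ ω ∂μ, ξ ω = 1 ∨ ξ ω = -1 := by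
  have hdisj : Disjoint (ξ ⁻¹' {1}) (ξ ⁻¹' {-1}) :=
    (Set.disjoint_singleton.2 (by norm_num)).preimage ξ
  refine (mem_ae_iff_prob_eq_one ((hm (measurableSet_singleton _)).union
    (hm (measurableSet_singleton _)))).2 ?_
  rw [measure_union hdisj (hm (measurableSet_singleton _)), hξ.1, hξ.2,
    ENNReal.inv_two_add_inv_two]

theorem IsRademacher.integral_eq_zero [IsProbabilityMeasure μ] (hξ : IsRademacher ξ μ)
    (hm : Measurable ξ) : ∫ ω, ξ ω ∂μ = 0 := by
  have hA : MeasurableSet (ξ ⁻¹' {1}) := hm (measurableSet_singleton 1)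
  have hB : MeasurableSet (ξ ⁻¹' {-1}) := hm (measurableSet_singleton (-1))
  have hsplit : ξ =ᵐ[μ] fun ω => (ξ ⁻¹' {1}).indicator 1 ω - (ξ ⁻¹' {-1}).indicator 1 ω := by
    filter_upwards [hξ.ae_eq_one_or_neg_one hm] with ω hω
    rcases hω with hω | hω <;> norm_num [hω]
  rw [integral_congr_ae hsplit, integral_sub ((integrable_const _).indicator hA)
      ((integrable_const _).indicator hB), integral_indicator_one hA, integral_indicator_one hB,
    measureReal_def, measureReal_def, hξ.1, hξ.2, sub_self]

end Rademacher

section Hashing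

variable {Ω ι : Type*} {κ : Type} [DecidableEq κ]

def collisionSign (h : ι → Ω → κ) (ξ : ι → Ω → ℝ) (i k : ι) (ω : Ω) : ℝ :=
  if h i ω = h k ω then ξ i ω * ξ k ω else 0

def IndepHashSign [MeasurableSpace Ω] [MeasurableSpace κ] (h : ι → Ω → κ)
    (ξ : ι → Ω → ℝ) (μ : Measure Ω) : Prop :=
  iIndepFun (β := fun k : ι ⊕ ι => Sum.elim (fun _ => κ) (fun _ => ℝ) k)
    (m := fun k => Sum.rec (fun _ => (inferInstance : MeasurableSpace κ))
      (fun _ => (inferInstance : MeasurableSpace ℝ)) k)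
    (fun k => Sum.rec (fun i => h i) (fun i => ξ i) k) μ

variable {h : ι → Ω → κ} {ξ : ι → Ω → ℝ}

theorem sum_hashed_mul_hashed_eq_sum_collisionSign [Fintype ι] [Fintype κ]
    (a b : ι → ℝ) (ω : Ω) :
    ∑ j, (∑ i, if h i ω = j then ξ i ω * a i else 0) *
        (∑ i, if h i ω = j then ξ i ω * b i else 0) =
      ∑ i, ∑ k, a i * b k * collisionSign h ξ i k ω := by
  rw [sum_fiber_mul_sum_fiber]
  refine sum_congr rfl fun i _ => sum_congr rfl fun k _ => ?_
  unfold collisionSign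
  split_ifs <;> ring

variable [MeasurableSpace Ω] {μ : Measure Ω}

theorem integral_collisionSign_self [IsProbabilityMeasure μ]
    (hpm : ∀ i, ∀ᵐ ω ∂μ, ξ i ω = 1 ∨ ξ i ω = -1) (i : ι) :
    ∫ ω, collisionSign h ξ i i ω ∂μ = 1 := by
  have hsq : collisionSign h ξ i i =ᵐ[μ] fun _ => 1 := by
    filter_upwards [hpm i] with ω hω
    rcases hω with hω | hω <;> simp [collisionSign, hω]
  simp [integral_congr_ae hsq]

variable [MeasurableSpace κ] [MeasurableEq κ]

theorem indepFun_sign_collision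
    (hindep : IndepHashSign h ξ μ)
    (hhm : ∀ i, Measurable (h i)) (hξm : ∀ i, Measurable (ξ i)) {i k : ι} (hik : i ≠ k) :
    IndepFun (ξ i) (fun ω => if h i ω = h k ω then ξ k ω else 0) μ := by
  classical
  -- instance search does not reduce `Sum.elim` to find the coordinate measurable spaces
  let _ (j : ι ⊕ ι) : MeasurableSpace (Sum.elim (fun _ => κ) (fun _ => ℝ) j) :=
    Sum.rec (fun _ => (inferInstance : MeasurableSpace κ))
      (fun _ => (inferInstance : MeasurableSpace ℝ)) j
  have hdisj : Disjoint ({Sum.inr i} : Finset (ι ⊕ ι)) {Sum.inl i, Sum.inl k, Sum.inr k} := by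
    simp [hik]
  have hψ : Measurable fun v : ∀ j : ({Sum.inl i, Sum.inl k, Sum.inr k} : Finset (ι ⊕ ι)),
      Sum.elim (fun _ => κ) (fun _ => ℝ) (j : ι ⊕ ι) =>
      if (show κ from v ⟨.inl i, by simp⟩) = (show κ from v ⟨.inl k, by simp⟩) then
        (show ℝ from v ⟨.inr k, by simp⟩) else 0 :=
    Measurable.ite (measurableSet_eq_fun (measurable_pi_apply _) (measurable_pi_apply _))
      (measurable_pi_apply _) measurable_const
  exact (hindep.indepFun_finset _ _ hdisj (fun j => j.rec hhm hξm)).comp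
    (measurable_pi_apply ⟨.inr i, mem_singleton_self _⟩) hψ

theorem integrable_collisionSign [IsFiniteMeasure μ]
    (hhm : ∀ i, Measurable (h i)) (hξm : ∀ i, Measurable (ξ i))
    (hpm : ∀ i, ∀ᵐ ω ∂μ, ξ i ω = 1 ∨ ξ i ω = -1) (i k : ι) :
    Integrable (collisionSign h ξ i k) μ := by
  refine Integrable.of_bound ?_ 1 ?_
  · exact (Measurable.ite (measurableSet_eq_fun (hhm i) (hhm k)) ((hξm i).mul (hξm k))
      measurable_const).aestronglyMeasurable
  · filter_upwards [hpm i, hpm k] with ω hi hk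
    unfold collisionSign
    split_ifs <;> rcases hi with hi | hi <;> rcases hk with hk | hk <;> simp [hi, hk]

theorem integral_collisionSign_of_ne [IsProbabilityMeasure μ]
    (hindep : IndepHashSign h ξ μ)
    (hhm : ∀ i, Measurable (h i)) (hξm : ∀ i, Measurable (ξ i))
    (hξ : ∀ i, IsRademacher (ξ i) μ) {i k : ι} (hik : i ≠ k) :
    ∫ ω, collisionSign h ξ i k ω ∂μ = 0 := by
  have hfactor : collisionSign h ξ i k = ξ i * fun ω => if h i ω = h k ω then ξ k ω else 0 := by
    ext ω
    simp [collisionSign, mul_ite]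
  rw [hfactor, (indepFun_sign_collision hindep hhm hξm hik).integral_mul_eq_mul_integral
    (hξm i).aestronglyMeasurable (Measurable.ite (measurableSet_eq_fun (hhm i) (hhm k)) (hξm k)
      measurable_const).aestronglyMeasurable, (hξ i).integral_eq_zero (hξm i), zero_mul]

end Hashing

theorem feature_hashing_unbiased_general
    {Ω : Type*} [MeasurableSpace Ω] (μ : Measure Ω) [IsProbabilityMeasure μ]
    (n m : ℕ) (a b : Fin n → ℝ)
    (h : Fin n → Ω → Fin m) (ξ : Fin n → Ω → ℝ)
    (hhm : ∀ i, Measurable (h i)) (hξm : ∀ i, Measurable (ξ i))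
    (hsign : ∀ i, μ (ξ i ⁻¹' {1}) = 2⁻¹ ∧ μ (ξ i ⁻¹' {-1}) = 2⁻¹)
    (hindep : iIndepFun
      (β := fun k : Fin n ⊕ Fin n => Sum.elim (fun _ => Fin m) (fun _ => ℝ) k)
      (m := fun k => Sum.rec (fun _ => (inferInstance : MeasurableSpace (Fin m)))
        (fun _ => (inferInstance : MeasurableSpace ℝ)) k)
      (fun k => Sum.rec (fun i => h i) (fun i => ξ i) k) μ) :
    (∫ ω, ∑ j : Fin m,
        (∑ i, if h i ω = j then ξ i ω * a i else 0) *
          (∑ i, if h i ω = j then ξ i ω * b i else 0) ∂μ) =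
      ∑ i, a i * b i := by
  have hpm i : ∀ᵐ ω ∂μ, ξ i ω = 1 ∨ ξ i ω = -1 :=
    IsRademacher.ae_eq_one_or_neg_one (hsign i) (hξm i)
  have hint i k := integrable_collisionSign hhm hξm hpm i k
  have hcoll i k : ∫ ω, collisionSign h ξ i k ω ∂μ = if i = k then 1 else 0 := by
    split_ifs with hik
    · exact hik ▸ integral_collisionSign_self hpm i
    · exact integral_collisionSign_of_ne hindep hhm hξm hsign hik
  simp_rw [sum_hashed_mul_hashed_eq_sum_collisionSign]
  rw [integral_finsetSum _ fun i _ => integrable_finsetSum _ fun k _ => (hint i k).const_mul _]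
  simp_rw [integral_finsetSum _ fun k _ => (hint _ k).const_mul _, integral_const_mul, hcoll]
  simp

/-- feature hashing is unbiased: Let `a = φ(x), b = φ(x') ∈ ℝ^n` be fixed. Let
`h : {1,…,n} → {1,…,m}` and `ξ : {1,…,n} → {±1}` be independent uniformly random hash
functions (all values independent and uniform). With `φ̄_j(x) = ∑_{i : h i = j} ξ i * a i`,
`E[φ̄(x)ᵀ φ̄(x')] = φ(x)ᵀ φ(x') = ∑ i, a i * b i`. -/
theorem feature_hashing_unbiased
    {Ω : Type*} [MeasurableSpace Ω] (μ : Measure Ω) [IsProbabilityMeasure μ]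
    (n m : ℕ) (hm : 0 < m) (a b : Fin n → ℝ)
    (h : Fin n → Ω → Fin m) (ξ : Fin n → Ω → ℝ)
    (hhm : ∀ i, Measurable (h i)) (hξm : ∀ i, Measurable (ξ i))
    (hunif : ∀ i (j : Fin m), μ (h i ⁻¹' {j}) = (m : ENNReal)⁻¹)
    (hsign : ∀ i, μ (ξ i ⁻¹' {1}) = 2⁻¹ ∧ μ (ξ i ⁻¹' {-1}) = 2⁻¹)
    (hindep : iIndepFun
      (β := fun k : Fin n ⊕ Fin n => Sum.elim (fun _ => Fin m) (fun _ => ℝ) k)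
      (m := fun k => Sum.rec (fun _ => (inferInstance : MeasurableSpace (Fin m)))
        (fun _ => (inferInstance : MeasurableSpace ℝ)) k)
      (fun k => Sum.rec (fun i => h i) (fun i => ξ i) k) μ) :
    (∫ ω, ∑ j : Fin m,
        (∑ i, if h i ω = j then ξ i ω * a i else 0) *
          (∑ i, if h i ω = j then ξ i ω * b i else 0) ∂μ) =
      ∑ i, a i * b i :=
  feature_hashing_unbiased_general μ n m a b h ξ hhm hξm hsign hindep
end

section
/- (Feature hashing variance bound) In the setting above, Var[φ̄(x)^T φ̄(x')] ≤ C/m for a constant C depending only on the norms of φ(x) and φ(x') (i.e., Var = O(1/m)). -/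
/-!
Write `X = ⟨φ̄(x), φ̄(x')⟩ = ∑_{i,k} [h i = h k] ξ i ξ k a i b k`. Since `ξ i ^ 2 = 1`, the diagonal
terms add up to the constant `d = ⟨a, b⟩`, and each off-diagonal term is bounded by
`|a i b k| [h i = h k]`, a collision indicator of expectation `1/m` by independence and
uniformity of the hashes. If `Z` is the sum of these bounds and `B = ∑_{i ≠ k} |a i b k| ≥ Z`, then
`Var X ≤ E[(X - d)²] ≤ E[Z²] ≤ B E[Z] = B²/m`.
-/

open MeasureTheory ProbabilityTheory Finset

universe u

section HashFeature

variable {ι κ : Type*} [Fintype ι] [DecidableEq κ]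

def hashFeature (h : ι → κ) (ξ a : ι → ℝ) (j : κ) : ℝ :=
  ∑ i, if h i = j then ξ i * a i else 0

theorem sum_hashFeature_mul_hashFeature [Fintype κ] (h : ι → κ) (ξ a b : ι → ℝ) :
    ∑ j, hashFeature h ξ a j * hashFeature h ξ b j =
      ∑ i, ∑ k, if h i = h k then ξ i * ξ k * (a i * b k) else 0 := by
  simp only [hashFeature, sum_mul_sum, ite_mul, mul_ite, zero_mul, mul_zero]
  rw [sum_comm]
  refine sum_congr rfl fun i _ => ?_
  rw [sum_comm]
  refine sum_congr rfl fun k _ => ?_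
  simp [eq_comm, mul_mul_mul_comm]

theorem abs_sum_hashFeature_mul_sub_le [Fintype κ] [DecidableEq ι] (h : ι → κ) {ξ : ι → ℝ}
    (hξ : ∀ i, |ξ i| = 1) (a b : ι → ℝ) :
    |∑ j, hashFeature h ξ a j * hashFeature h ξ b j - ∑ i, a i * b i| ≤
      ∑ p ∈ univ.offDiag, if h p.1 = h p.2 then |a p.1 * b p.2| else 0 := by
  have hdiag : ∀ i, ξ i * ξ i = 1 := fun i => by rw [← abs_mul_abs_self, hξ, one_mul]
  rw [sum_hashFeature_mul_hashFeature, ← sum_product', ← diag_union_offDiag,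
    sum_union (disjoint_diag_offDiag _), sum_diag]
  simp only [if_true, hdiag, one_mul, add_sub_cancel_left]
  refine (abs_sum_le_sum_abs _ _).trans (sum_le_sum fun p _ => ?_)
  split_ifs <;> simp [abs_mul, hξ]

end HashFeature

theorem ite_eq_eq_indicator {α κ : Type*} [DecidableEq κ] (f g : α → κ) (r : ℝ) :
    (fun x => if f x = g x then r else 0) = {x | f x = g x}.indicator fun _ => r := by
  ext x
  simp [Set.indicator_apply]

section Probability

variable {Ω : Type*} [MeasurableSpace Ω] {μ : Measure Ω}

theorem ae_abs_eq_one_of_measure_preimage [IsProbabilityMeasure μ] {X : Ω → ℝ}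
    (hX : Measurable X) (h₁ : μ (X ⁻¹' {1}) = 2⁻¹) (h₂ : μ (X ⁻¹' {-1}) = 2⁻¹) :
    ∀ᵐ ω ∂μ, |X ω| = 1 := by
  have hpm : μ (X ⁻¹' {1, -1}) = 1 := by
    rw [Set.insert_eq, Set.preimage_union,
      measure_union ((Set.disjoint_singleton.2 (by norm_num)).preimage X)
        (hX (measurableSet_singleton _)), h₁, h₂, ENNReal.inv_two_add_inv_two]
  have hae : X ⁻¹' {1, -1} ∈ ae μ :=
    mem_ae_iff.2 ((prob_compl_eq_zero_iff (hX ((measurableSet_singleton _).insert _))).2 hpm)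
  filter_upwards [hae] with ω hω
  obtain hω | hω : X ω = 1 ∨ X ω = -1 := hω
  all_goals simp [hω]

theorem variance_le_mul_integral_of_abs_sub_le [IsProbabilityMeasure μ] {X Z : Ω → ℝ} {d B : ℝ}
    (hX : AEStronglyMeasurable X μ) (hZ : Integrable Z μ) (hXZ : ∀ᵐ ω ∂μ, |X ω - d| ≤ Z ω)
    (hZB : ∀ᵐ ω ∂μ, Z ω ≤ B) :
    Var[X; μ] ≤ B * μ[Z] := by
  calc Var[X; μ] = Var[fun ω => X ω - d; μ] := (variance_sub_const hX d).symm
    _ ≤ ∫ ω, (X ω - d) ^ 2 ∂μ := variance_le_expectation_sq (by fun_prop)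
    _ ≤ ∫ ω, B * Z ω ∂μ := by
        refine integral_mono_of_nonneg (ae_of_all _ fun ω => sq_nonneg _) (hZ.const_mul B) ?_
        filter_upwards [hXZ, hZB] with ω hXZω hZBω
        nlinarith [abs_nonneg (X ω - d), sq_abs (X ω - d)]
    _ = B * μ[Z] := integral_const_mul B Z

variable {κ : Type*} [MeasurableSpace κ] [MeasurableSingletonClass κ]

theorem measurable_hashFeature {ι : Type*} [Fintype ι] [DecidableEq κ] {h : ι → Ω → κ}
    {ξ : ι → Ω → ℝ} (hh : ∀ i, Measurable (h i)) (hξ : ∀ i, Measurable (ξ i)) (a : ι → ℝ)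
    (j : κ) :
    Measurable fun ω => hashFeature (fun i => h i ω) (fun i => ξ i ω) a j :=
  Finset.measurable_sum _ fun i _ =>
    ((hξ i).mul_const _).ite (hh i (measurableSet_singleton j)) measurable_const

variable [Countable κ] {f g : Ω → κ}

theorem ProbabilityTheory.IndepFun.measure_setOf_eq_eq [IsProbabilityMeasure μ]
    (hfg : IndepFun f g μ) (hf : Measurable f) (hg : Measurable g) {c : ENNReal}
    (hc : ∀ j, μ (f ⁻¹' {j}) = c) :
    μ {ω | f ω = g ω} = c := by
  have hfib : ∀ u : Ω → κ, Pairwise (Function.onFun Disjoint fun j => u ⁻¹' {j}) :=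
    fun u j k hjk => (Set.disjoint_singleton.2 hjk).preimage u
  have hdiag : {ω | f ω = g ω} = ⋃ j, f ⁻¹' {j} ∩ g ⁻¹' {j} := by ext; simp [eq_comm]
  calc μ {ω | f ω = g ω} = ∑' j, μ (f ⁻¹' {j} ∩ g ⁻¹' {j}) := by
        rw [hdiag, measure_iUnion
          (fun j k hjk => (hfib f hjk).mono Set.inter_subset_left Set.inter_subset_left)
          fun j => (hf (measurableSet_singleton j)).inter (hg (measurableSet_singleton j))]
    _ = ∑' j, c * μ (g ⁻¹' {j}) := by
        simp_rw [hfg.measure_inter_preimage_eq_mul _ _ (measurableSet_singleton _)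
          (measurableSet_singleton _), hc]
    _ = c := by
        rw [ENNReal.tsum_mul_left,
          ← measure_iUnion (hfib g) fun j => hg (measurableSet_singleton j),
          ← Set.preimage_iUnion, Set.iUnion_of_singleton, Set.preimage_univ, measure_univ,
          mul_one]

variable [DecidableEq κ]

theorem integrable_ite_eq [IsFiniteMeasure μ] (hf : Measurable f) (hg : Measurable g) (r : ℝ) :
    Integrable (fun ω => if f ω = g ω then r else 0) μ := by
  rw [ite_eq_eq_indicator]
  exact (integrable_const r).indicator (measurableSet_eq_fun hf hg)

theorem ProbabilityTheory.IndepFun.integral_ite_eq_eq [IsProbabilityMeasure μ]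
    (hfg : IndepFun f g μ) (hf : Measurable f) (hg : Measurable g) {c : ENNReal}
    (hc : ∀ j, μ (f ⁻¹' {j}) = c) (r : ℝ) :
    ∫ ω, (if f ω = g ω then r else 0) ∂μ = c.toReal * r := by
  rw [ite_eq_eq_indicator, integral_indicator_const r (measurableSet_eq_fun hf hg),
    measureReal_def, hfg.measure_setOf_eq_eq hf hg hc, smul_eq_mul]

end Probability

/-- feature hashing variance bound: With the same hashing setup
(`h : {1,…,n} → {1,…,m}` uniform, `ξ : {1,…,n} → {±1}` Rademacher, all independent, and
`φ̄_j(x) = ∑_{i : h i = j} ξ i * a i`), there is a constant `C` depending only on `a = φ(x)` and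
`b = φ(x')` such that `Var[φ̄(x)ᵀ φ̄(x')] ≤ C/m` for every `m` and every such hashing scheme. -/
theorem feature_hashing_variance_bound
    (n : ℕ) (a b : Fin n → ℝ) :
    ∃ C > 0, ∀ (Ω : Type u) (_ : MeasurableSpace Ω) (μ : Measure Ω)
      (_ : IsProbabilityMeasure μ) (m : ℕ) (_ : 0 < m)
      (h : Fin n → Ω → Fin m) (ξ : Fin n → Ω → ℝ),
      (∀ i, Measurable (h i)) → (∀ i, Measurable (ξ i)) →
      (∀ i (j : Fin m), μ (h i ⁻¹' {j}) = (m : ENNReal)⁻¹) →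
      (∀ i, μ (ξ i ⁻¹' {1}) = 2⁻¹ ∧ μ (ξ i ⁻¹' {-1}) = 2⁻¹) →
      iIndepFun
        (β := fun k : Fin n ⊕ Fin n => Sum.elim (fun _ => Fin m) (fun _ => ℝ) k)
        (m := fun k => Sum.rec (fun _ => (inferInstance : MeasurableSpace (Fin m)))
          (fun _ => (inferInstance : MeasurableSpace ℝ)) k)
        (fun k => Sum.rec (fun i => h i) (fun i => ξ i) k) μ →
      variance (fun ω => ∑ j : Fin m,
          (∑ i, if h i ω = j then ξ i ω * a i else 0) *
            (∑ i, if h i ω = j then ξ i ω * b i else 0)) μ ≤ C / m := by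
  set B := ∑ p ∈ univ.offDiag, |a p.1 * b p.2|
  refine ⟨B ^ 2 + 1, by positivity, ?_⟩
  intro Ω _ μ _ m _ h ξ hh hξ hunif hsign hindep
  set Z : Ω → ℝ := fun ω =>
    ∑ p ∈ univ.offDiag, if h p.1 ω = h p.2 ω then |a p.1 * b p.2| else 0
  have hindep_pair : ∀ p ∈ (univ : Finset (Fin n)).offDiag, IndepFun (h p.1) (h p.2) μ :=
    fun p hp => hindep.indepFun (i := .inl p.1) (j := .inl p.2)
      (by simpa using (mem_offDiag.1 hp).2.2)
  have hZ_int : Integrable Z μ :=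
    integrable_finsetSum _ fun p _ => integrable_ite_eq (hh p.1) (hh p.2) _
  have hZ_integral : μ[Z] = B / m := by
    rw [integral_finsetSum _ fun p _ => integrable_ite_eq (hh p.1) (hh p.2) _,
      sum_congr rfl fun p hp => (hindep_pair p hp).integral_ite_eq_eq (hh p.1) (hh p.2)
        (hunif p.1) _,
      ← mul_sum, ENNReal.toReal_inv, ENNReal.toReal_natCast, inv_mul_eq_div]
  have hZ_le : ∀ ω, Z ω ≤ B := fun ω =>
    sum_le_sum fun p _ => by split_ifs; exacts [le_rfl, abs_nonneg _]
  have hXZ : ∀ᵐ ω ∂μ, |∑ j, hashFeature (fun i => h i ω) (fun i => ξ i ω) a j *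
      hashFeature (fun i => h i ω) (fun i => ξ i ω) b j - ∑ i, a i * b i| ≤ Z ω := by
    filter_upwards [ae_all_iff.2 fun i =>
      ae_abs_eq_one_of_measure_preimage (hξ i) (hsign i).1 (hsign i).2] with ω hω
    exact abs_sum_hashFeature_mul_sub_le _ hω a b
  calc _ ≤ B * μ[Z] := variance_le_mul_integral_of_abs_sub_le
          (Finset.measurable_sum _ fun j _ => (measurable_hashFeature hh hξ a j).mul
            (measurable_hashFeature hh hξ b j)).aestronglyMeasurable
          hZ_int hXZ (ae_of_all _ hZ_le)
    _ = B ^ 2 / m := by rw [hZ_integral, ← mul_div_assoc, ← sq]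
    _ ≤ (B ^ 2 + 1) / m := by gcongr; linarith
end
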